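/- arXiv:2504.16703 — 3 statements merged into one kernel-verified Lean document; each statement's English description precedes it below -/
import Mathlib

section
/- Let ⟨C(Q, Σ, Ψ), t⟩ be a configuration of a μStipula^DI contract C (equivalently, of a μStipula^DI+ contract). If Q ∉ InitEv(C) or Σ ≠ −, then ⟨C(Q, Σ, Ψ), t⟩ → ℂ if and only if ⟨C(Q, Σ, Ψ), t⟩ →_tp ℂ, for every configuration ℂ. -/
namespace MicroStipula

/-- A pending event (the same shape is used for event declarations occurring in
function bodies): `time ≫_line src ⇒ tgt`.  For a declaration, `time` is the delay `k`
of the time expression `now + k`. -/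
structure Ev where
  time : ℕ
  line : ℕ
  src  : ℕ
  tgt  : ℕ
  deriving DecidableEq

/-- A function declaration `@src name { body } ⇒ @tgt`. -/
structure FunDecl where
  src  : ℕ
  name : ℕ
  body : List Ev
  tgt  : ℕ
  deriving DecidableEq

/-- A μStipula contract: a finite set of states, an initial state and
a finite set of functions. -/
structure Contract where
  states : List ℕ
  init   : ℕ
  funs   : List FunDecl
  deriving DecidableEq

/-- The `Σ` component of a configuration: either `−` or a continuation `Ψ ⇒ Q`. -/
inductive Sig where
  | none : Sig
  | cont : Multiset Ev → ℕ → Sig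
  deriving DecidableEq

/-- A configuration `⟨C(Q, Σ, Ψ), t⟩`. -/
structure Config where
  state   : ℕ
  sig     : Sig
  pending : Multiset Ev
  time    : ℕ
  deriving DecidableEq

/-- `nored(Ψ, Q)`: `Ψ` contains no event of the form `0 ≫_n Q ⇒ Q'`. -/
def nored (Ψ : Multiset Ev) (Q : ℕ) : Prop :=
  ∀ e ∈ Ψ, e.time = 0 → e.src ≠ Q

/-- `Ψ↓`: remove the events with time value `0` and decrease all other time values by one. -/
def tickDown (Ψ : Multiset Ev) : Multiset Ev :=
  (Ψ.filter fun e => e.time ≠ 0).map fun e => ⟨e.time - 1, e.line, e.src, e.tgt⟩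

/-- The multiset of pending events generated by a function body
(the place-holder `now` is dropped: `now + k` becomes the value `k`). -/
def bodyEvents (W : List Ev) : Multiset Ev := (W : Multiset Ev)

/-- `InitEv C`: the set of initial states of the events of `C`. -/
def InitEv (C : Contract) : Set ℕ :=
  {Q | ∃ f ∈ C.funs, ∃ e ∈ f.body, e.src = Q}

/-- The transition relation `→` of μStipula. -/
inductive Step (C : Contract) : Config → Config → Prop
  | func {Ψ : Multiset Ev} {t : ℕ} (f : FunDecl) (hf : f ∈ C.funs)
      (hn : nored Ψ f.src) :
      Step C ⟨f.src, Sig.none, Ψ, t⟩ ⟨f.src, Sig.cont (bodyEvents f.body) f.tgt, Ψ, t⟩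
  | stateChange {Q Q' : ℕ} {Ψ' Ψ : Multiset Ev} {t : ℕ} :
      Step C ⟨Q, Sig.cont Ψ' Q', Ψ, t⟩ ⟨Q', Sig.none, Ψ' + Ψ, t⟩
  | eventMatch {Q : ℕ} {Ψ : Multiset Ev} {t : ℕ} (e : Ev)
      (he : e ∈ Ψ) (h0 : e.time = 0) (hs : e.src = Q) :
      Step C ⟨Q, Sig.none, Ψ, t⟩ ⟨Q, Sig.cont 0 e.tgt, Ψ.erase e, t⟩
  | tick {Q : ℕ} {Ψ : Multiset Ev} {t : ℕ} (hn : nored Ψ Q) :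
      Step C ⟨Q, Sig.none, Ψ, t⟩ ⟨Q, Sig.none, tickDown Ψ, t + 1⟩

/-- The transition relation `→_tp` of μStipula^DI+ (rule (Tick) replaced by (Tick-Plus)). -/
inductive StepTP (C : Contract) : Config → Config → Prop
  | func {Ψ : Multiset Ev} {t : ℕ} (f : FunDecl) (hf : f ∈ C.funs)
      (hn : nored Ψ f.src) :
      StepTP C ⟨f.src, Sig.none, Ψ, t⟩ ⟨f.src, Sig.cont (bodyEvents f.body) f.tgt, Ψ, t⟩
  | stateChange {Q Q' : ℕ} {Ψ' Ψ : Multiset Ev} {t : ℕ} :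
      StepTP C ⟨Q, Sig.cont Ψ' Q', Ψ, t⟩ ⟨Q', Sig.none, Ψ' + Ψ, t⟩
  | eventMatch {Q : ℕ} {Ψ : Multiset Ev} {t : ℕ} (e : Ev)
      (he : e ∈ Ψ) (h0 : e.time = 0) (hs : e.src = Q) :
      StepTP C ⟨Q, Sig.none, Ψ, t⟩ ⟨Q, Sig.cont 0 e.tgt, Ψ.erase e, t⟩
  | tickPlus {Q : ℕ} {Ψ : Multiset Ev} {t : ℕ} (hn : Q ∉ InitEv C) :
      StepTP C ⟨Q, Sig.none, Ψ, t⟩ ⟨Q, Sig.none, tickDown Ψ, t + 1⟩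

/-- State reachability (w.r.t. `→`): some configuration `⟨C(Q, −, Ψ), t'⟩` is reachable
from the initial configuration `⟨C(Q_init, −, −), t⟩`. -/
def Reachable (C : Contract) (Q : ℕ) : Prop :=
  ∃ t t' Ψ, Relation.ReflTransGen (Step C)
    ⟨C.init, Sig.none, 0, t⟩ ⟨Q, Sig.none, Ψ, t'⟩

/-- State reachability w.r.t. `→_tp`. -/
def ReachableTP (C : Contract) (Q : ℕ) : Prop :=
  ∃ t t' Ψ, Relation.ReflTransGen (StepTP C)
    ⟨C.init, Sig.none, 0, t⟩ ⟨Q, Sig.none, Ψ, t'⟩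

/-- Well-formedness: every state mentioned in the contract belongs to its set of states. -/
def Contract.WF (C : Contract) : Prop :=
  C.init ∈ C.states ∧ ∀ f ∈ C.funs, f.src ∈ C.states ∧ f.tgt ∈ C.states ∧
    ∀ e ∈ f.body, e.src ∈ C.states ∧ e.tgt ∈ C.states

/-- μStipula^I : every time expression is `now + 0`. -/
def Instantaneous (C : Contract) : Prop := ∀ f ∈ C.funs, ∀ e ∈ f.body, e.time = 0

/-- μStipula^TA : every time expression is `now + k` with `k > 0`. -/
def TimeAhead (C : Contract) : Prop := ∀ f ∈ C.funs, ∀ e ∈ f.body, 0 < e.time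

/-- μStipula^D : no state is both the initial state of a function and of an event. -/
def Determinate (C : Contract) : Prop := ∀ f ∈ C.funs, f.src ∉ InitEv C

/-- μStipula^DI. -/
def DetInst (C : Contract) : Prop := Determinate C ∧ Instantaneous C

/-- A pending event of the contract `C`: it stems from an event declaration of `C`,
with a (possibly) decreased time value. -/
def EvOf (C : Contract) (e : Ev) : Prop :=
  ∃ f ∈ C.funs, ∃ d ∈ f.body,
    e.line = d.line ∧ e.src = d.src ∧ e.tgt = d.tgt ∧ e.time ≤ d.time

/-- The possible `Σ` components of configurations of `C`. -/
inductive SigOf (C : Contract) : Sig → Prop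
  | none : SigOf C Sig.none
  | func (f : FunDecl) (hf : f ∈ C.funs) : SigOf C (Sig.cont (bodyEvents f.body) f.tgt)
  | event (Q : ℕ) (hQ : Q ∈ C.states) : SigOf C (Sig.cont 0 Q)

/-- Configurations of a contract `C` (the set `𝒞_C`). -/
def ConfigOf (C : Contract) (c : Config) : Prop :=
  c.state ∈ C.states ∧ SigOf C c.sig ∧ ∀ e ∈ c.pending, EvOf C e

/-- The quasi-ordering `⪯` on configurations: same state, same `Σ`, multiset inclusion
of the pending events; the time component is disregarded. -/
def ConfigLe (c c' : Config) : Prop :=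
  c.state = c'.state ∧ c.sig = c'.sig ∧ c.pending ≤ c'.pending

/-- The (unique) shape of a (Tick) transition out of a configuration. -/
def IsTickStep (c c' : Config) : Prop :=
  c.sig = Sig.none ∧ c' = ⟨c.state, Sig.none, tickDown c.pending, c.time + 1⟩

/-- A configuration is stuck if every computation starting from it consists only of
instances of rule (Tick). -/
def Stuck (C : Contract) (c : Config) : Prop :=
  ∀ c₁ c₂, Relation.ReflTransGen (Step C) c c₁ → Step C c₁ c₂ → IsTickStep c₁ c₂

/-- A well-quasi-ordering: every infinite sequence contains an increasing pair. -/
def IsWQO {α : Type*} (r : α → α → Prop) : Prop :=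
  ∀ f : ℕ → α, ∃ i j, i < j ∧ r (f i) (f j)

/-- Upward compatibility of an ordering with a transition relation. -/
def UpwardCompatible {α : Type*} (step le : α → α → Prop) : Prop :=
  ∀ c₁ c₁' c₂, le c₁ c₁' → step c₁ c₂ →
    ∃ c₂', Relation.ReflTransGen step c₁' c₂' ∧ le c₂ c₂'

/-- Well-structured transition system. -/
def IsWSTS {α : Type*} (step le : α → α → Prop) : Prop :=
  Reflexive le ∧ Transitive le ∧ IsWQO le ∧ UpwardCompatible step le

/-- `↑𝒟` within the configurations of `C`. -/
def upSet (C : Contract) (D : Set Config) : Set Config :=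
  {c' | ConfigOf C c' ∧ ∃ c ∈ D, ConfigLe c c'}

/-- `Pred(𝒟)` w.r.t. `→_tp`, within the configurations of `C`. -/
def predTP (C : Contract) (D : Set Config) : Set Config :=
  {c | ConfigOf C c ∧ ∃ c' ∈ D, StepTP C c c'}

/-! ### Encodings -/

def Ev.equivProd : Ev ≃ ℕ × ℕ × ℕ × ℕ :=
  ⟨fun e => (e.time, e.line, e.src, e.tgt), fun p => ⟨p.1, p.2.1, p.2.2.1, p.2.2.2⟩,
   fun _ => rfl, fun _ => rfl⟩

instance : Encodable Ev := Encodable.ofEquiv _ Ev.equivProd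

def FunDecl.equivProd : FunDecl ≃ ℕ × ℕ × List Ev × ℕ :=
  ⟨fun f => (f.src, f.name, f.body, f.tgt), fun p => ⟨p.1, p.2.1, p.2.2.1, p.2.2.2⟩,
   fun _ => rfl, fun _ => rfl⟩

instance : Encodable FunDecl := Encodable.ofEquiv _ FunDecl.equivProd

def Contract.equivProd : Contract ≃ List ℕ × ℕ × List FunDecl :=
  ⟨fun C => (C.states, C.init, C.funs), fun p => ⟨p.1, p.2.1, p.2.2⟩,
   fun _ => rfl, fun _ => rfl⟩

instance : Encodable Contract := Encodable.ofEquiv _ Contract.equivProd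

def Sig.equivOption : Sig ≃ Option (Multiset Ev × ℕ) where
  toFun s := match s with | Sig.none => Option.none | Sig.cont m q => some (m, q)
  invFun o := match o with | Option.none => Sig.none | some (m, q) => Sig.cont m q
  left_inv s := by cases s <;> rfl
  right_inv o := by rcases o with _ | ⟨m, q⟩ <;> rfl

instance : Encodable Sig := Encodable.ofEquiv _ Sig.equivOption

def Config.equivProd : Config ≃ ℕ × Sig × Multiset Ev × ℕ :=
  ⟨fun c => (c.state, c.sig, c.pending, c.time), fun p => ⟨p.1, p.2.1, p.2.2.1, p.2.2.2⟩,
   fun _ => rfl, fun _ => rfl⟩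

instance : Encodable Config := Encodable.ofEquiv _ Config.equivProd

/-! ### Minsky machines -/

/-- A Minsky machine instruction (the register is `false` for `R₁`, `true` for `R₂`):
`inc r next` and `decjump r ifZero ifPos`. -/
inductive MInstr where
  | inc : Bool → ℕ → MInstr
  | decjump : Bool → ℕ → ℕ → MInstr
  deriving DecidableEq

/-- A Minsky machine. -/
structure Minsky where
  states : List ℕ
  init   : ℕ
  final  : ℕ
  prog   : List (ℕ × MInstr)
  deriving DecidableEq

/-- Well-formed Minsky machine: the final state has no instruction. -/
def Minsky.WF (M : Minsky) : Prop :=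
  M.init ∈ M.states ∧ M.final ∈ M.states ∧ (∀ i, (M.final, i) ∉ M.prog) ∧
  ∀ p ∈ M.prog, p.1 ∈ M.states ∧
    (match p.2 with
     | MInstr.inc _ q => q ∈ M.states
     | MInstr.decjump _ q q' => q ∈ M.states ∧ q' ∈ M.states)

/-- The transition relation of a Minsky machine on configurations `(Q, v₁, v₂)`. -/
inductive MStep (M : Minsky) : ℕ × ℕ × ℕ → ℕ × ℕ × ℕ → Prop
  | inc₁ {Q Q' v₁ v₂} : (Q, MInstr.inc false Q') ∈ M.prog →
      MStep M (Q, v₁, v₂) (Q', v₁ + 1, v₂)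
  | inc₂ {Q Q' v₁ v₂} : (Q, MInstr.inc true Q') ∈ M.prog →
      MStep M (Q, v₁, v₂) (Q', v₁, v₂ + 1)
  | jz₁ {Q Q' Q'' v₂} : (Q, MInstr.decjump false Q' Q'') ∈ M.prog →
      MStep M (Q, 0, v₂) (Q', 0, v₂)
  | dec₁ {Q Q' Q'' v₁ v₂} : (Q, MInstr.decjump false Q' Q'') ∈ M.prog →
      MStep M (Q, v₁ + 1, v₂) (Q'', v₁, v₂)
  | jz₂ {Q Q' Q'' v₁} : (Q, MInstr.decjump true Q' Q'') ∈ M.prog →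
      MStep M (Q, v₁, 0) (Q', v₁, 0)
  | dec₂ {Q Q' Q'' v₁ v₂} : (Q, MInstr.decjump true Q' Q'') ∈ M.prog →
      MStep M (Q, v₁, v₂ + 1) (Q'', v₁, v₂)

/-- The halting problem: the final state is reachable from `(Q₀, 0, 0)`. -/
def Minsky.Halts (M : Minsky) : Prop :=
  ∃ v₁ v₂, Relation.ReflTransGen (MStep M) (M.init, 0, 0) (M.final, v₁, v₂)

def MInstr.equivSum : MInstr ≃ (Bool × ℕ) ⊕ (Bool × ℕ × ℕ) where
  toFun i := match i with
    | MInstr.inc r q => Sum.inl (r, q)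
    | MInstr.decjump r q q' => Sum.inr (r, q, q')
  invFun s := match s with
    | Sum.inl (r, q) => MInstr.inc r q
    | Sum.inr (r, q, q') => MInstr.decjump r q q'
  left_inv i := by cases i <;> rfl
  right_inv s := by rcases s with ⟨r, q⟩ | ⟨r, q, q'⟩ <;> rfl

instance : Encodable MInstr := Encodable.ofEquiv _ MInstr.equivSum

def Minsky.equivProd : Minsky ≃ List ℕ × ℕ × ℕ × List (ℕ × MInstr) :=
  ⟨fun M => (M.states, M.init, M.final, M.prog), fun p => ⟨p.1, p.2.1, p.2.2.1, p.2.2.2⟩,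
   fun _ => rfl, fun _ => rfl⟩

instance : Encodable Minsky := Encodable.ofEquiv _ Minsky.equivProd

/-! ### Clauses -/

/-- A clause of a contract: either a function `⟨Q, f, Q'⟩` or an event `⟨Q, ev_n, Q'⟩`. -/
inductive Clause where
  | fn : ℕ → ℕ → ℕ → Clause
  | ev : ℕ → ℕ → ℕ → Clause
  deriving DecidableEq

/-- The clause belongs to the contract. -/
def ClauseOf (C : Contract) : Clause → Prop
  | Clause.fn Q g Q' => ∃ f ∈ C.funs, f.src = Q ∧ f.name = g ∧ f.tgt = Q'
  | Clause.ev Q n Q' => ∃ f ∈ C.funs, ∃ e ∈ f.body, e.line = n ∧ e.src = Q ∧ e.tgt = Q'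

/-- Some computation starting from the initial configuration of `C` contains a transition
executing the given clause: an instance of rule (Function) invoking the function, resp.
an instance of rule (Event-Match) firing the event. -/
def Executes (C : Contract) : Clause → Prop
  | Clause.fn Q g Q' => ∃ t t' Ψ, ∃ f ∈ C.funs,
      f.src = Q ∧ f.name = g ∧ f.tgt = Q' ∧ nored Ψ Q ∧
      Relation.ReflTransGen (Step C) ⟨C.init, Sig.none, 0, t⟩ ⟨Q, Sig.none, Ψ, t'⟩
  | Clause.ev Q n Q' => ∃ t t' Ψ, ∃ e ∈ Ψ,
      e.time = 0 ∧ Ev.line e = n ∧ e.src = Q ∧ e.tgt = Q' ∧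
      Relation.ReflTransGen (Step C) ⟨C.init, Sig.none, 0, t⟩ ⟨Q, Sig.none, Ψ, t'⟩

def Clause.equivSum : Clause ≃ (ℕ × ℕ × ℕ) ⊕ (ℕ × ℕ × ℕ) where
  toFun c := match c with
    | Clause.fn a b d => Sum.inl (a, b, d)
    | Clause.ev a b d => Sum.inr (a, b, d)
  invFun s := match s with
    | Sum.inl (a, b, d) => Clause.fn a b d
    | Sum.inr (a, b, d) => Clause.ev a b d
  left_inv c := by cases c <;> rfl
  right_inv s := by rcases s with ⟨a, b, d⟩ | ⟨a, b, d⟩ <;> rfl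

instance : Encodable Clause := Encodable.ofEquiv _ Clause.equivSum

/-- `⟦v₁, v₂⟧_Q`: the multiset made of `v₁` copies of a first event, `v₂` copies of a
second event, and one event depending on the machine state `Q`. -/
def msem (e₁ e₂ : Minsky → Ev) (e₃ : Minsky → ℕ → Ev) (M : Minsky)
    (Q v₁ v₂ : ℕ) : Multiset Ev :=
  Multiset.replicate v₁ (e₁ M) + Multiset.replicate v₂ (e₂ M) + {e₃ M Q}

theorem EvOf.src_mem_initEv {C : Contract} {e : Ev} (he : EvOf C e) : e.src ∈ InitEv C := by
  obtain ⟨f, hf, d, hd, -, hsrc, -⟩ := he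
  exact ⟨f, hf, d, hd, hsrc.symm⟩

theorem nored_of_notMem_initEv {C : Contract} {Ψ : Multiset Ev} {Q : ℕ}
    (hΨ : ∀ e ∈ Ψ, EvOf C e) (hQ : Q ∉ InitEv C) : nored Ψ Q := by
  rintro e he - rfl
  exact hQ (hΨ e he).src_mem_initEv

/-- On configurations of `C`, the guard `Q ∉ InitEv C` of (Tick-Plus) implies the guard
`nored Ψ Q` of (Tick), so every `→_tp` step is a `→` step. -/
theorem Step.of_stepTP {C : Contract} {c c' : Config} (hc : ∀ e ∈ c.pending, EvOf C e)
    (hs : StepTP C c c') : Step C c c' := by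
  cases hs with
  | func f hf hn => exact Step.func f hf hn
  | stateChange => exact Step.stateChange
  | eventMatch e he h0 hsrc => exact Step.eventMatch e he h0 hsrc
  | tickPlus hQ => exact Step.tick (nored_of_notMem_initEv hc hQ)

theorem StepTP.of_step {C : Contract} {c c' : Config}
    (hc : c.sig = Sig.none → c.state ∉ InitEv C) (hs : Step C c c') : StepTP C c c' := by
  cases hs with
  | func f hf hn => exact StepTP.func f hf hn
  | stateChange => exact StepTP.stateChange
  | eventMatch e he h0 hsrc => exact StepTP.eventMatch e he h0 hsrc
  | tick => exact StepTP.tickPlus (hc rfl)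

theorem step_iff_stepTP_of_notInitEv_or_sig_general (C : Contract)
    (Q : ℕ) (S : Sig) (Ψ : Multiset Ev) (t : ℕ)
    (hconf : ConfigOf C ⟨Q, S, Ψ, t⟩)
    (h : Q ∉ InitEv C ∨ S ≠ Sig.none) :
    ∀ c : Config, Step C ⟨Q, S, Ψ, t⟩ c ↔ StepTP C ⟨Q, S, Ψ, t⟩ c :=
  fun _ => ⟨StepTP.of_step fun hS => h.resolve_right (not_not_intro hS), Step.of_stepTP hconf.2.2⟩

/-- (Proposition 1.(i)) For a configuration `⟨C(Q, Σ, Ψ), t⟩` of a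
μStipula^DI contract `C` (equivalently, of a μStipula^DI+ contract), if `Q ∉ InitEv(C)`
or `Σ ≠ −`, then `⟨C(Q, Σ, Ψ), t⟩ → ℂ` iff `⟨C(Q, Σ, Ψ), t⟩ →_tp ℂ`. -/
theorem step_iff_stepTP_of_notInitEv_or_sig (C : Contract) (hwf : C.WF) (hDI : DetInst C)
    (Q : ℕ) (S : Sig) (Ψ : Multiset Ev) (t : ℕ)
    (hconf : ConfigOf C ⟨Q, S, Ψ, t⟩)
    (h : Q ∉ InitEv C ∨ S ≠ Sig.none) :
    ∀ c : Config, Step C ⟨Q, S, Ψ, t⟩ c ↔ StepTP C ⟨Q, S, Ψ, t⟩ c :=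
  step_iff_stepTP_of_notInitEv_or_sig_general C Q S Ψ t hconf h

end MicroStipula
end

section
/- Let ⟨C(Q, −, Ψ), t⟩ be a configuration of a μStipula^DI contract C (equivalently, of a μStipula^DI+ contract). If Q ∈ InitEv(C) and Ψ = 0 ≫_n Q ⇒ Q' | Ψ' for some n, Q', Ψ', then ⟨C(Q, −, Ψ), t⟩ → ℂ if and only if ⟨C(Q, −, Ψ), t⟩ →_tp ℂ, for every configuration ℂ. -/
namespace MicroStipula

theorem not_nored_src {Ψ : Multiset Ev} {e : Ev} (he : e ∈ Ψ) (h0 : e.time = 0) :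
    ¬ nored Ψ e.src :=
  fun h => h e he h0 rfl

/-- The (Event-Match) transitions, which `→` and `→_tp` share. -/
inductive EventMatchStep : Config → Config → Prop
  | mk {Q : ℕ} {Ψ : Multiset Ev} {t : ℕ} (e : Ev) (he : e ∈ Ψ) (h0 : e.time = 0)
      (hs : e.src = Q) :
      EventMatchStep ⟨Q, Sig.none, Ψ, t⟩ ⟨Q, Sig.cont 0 e.tgt, Ψ.erase e, t⟩

theorem step_iff_eventMatchStep_of_not_nored {C : Contract} {Q : ℕ} {Ψ : Multiset Ev}
    {t : ℕ} (h : ¬ nored Ψ Q) (c : Config) :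
    Step C ⟨Q, Sig.none, Ψ, t⟩ c ↔ EventMatchStep ⟨Q, Sig.none, Ψ, t⟩ c := by
  constructor
  · rintro (⟨f, hf, hn⟩ | _ | ⟨e, he, h0, hs⟩ | hn)
    · exact absurd hn h
    · exact .mk e he h0 hs
    · exact absurd hn h
  · rintro ⟨e, he, h0, hs⟩
    exact .eventMatch e he h0 hs

theorem stepTP_iff_eventMatchStep_of_not_nored {C : Contract} {Q : ℕ} {Ψ : Multiset Ev}
    {t : ℕ} (h : ¬ nored Ψ Q) (hQ : Q ∈ InitEv C) (c : Config) :
    StepTP C ⟨Q, Sig.none, Ψ, t⟩ c ↔ EventMatchStep ⟨Q, Sig.none, Ψ, t⟩ c := by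
  constructor
  · rintro (⟨f, hf, hn⟩ | _ | ⟨e, he, h0, hs⟩ | hn)
    · exact absurd hn h
    · exact .mk e he h0 hs
    · exact absurd hQ hn
  · rintro ⟨e, he, h0, hs⟩
    exact .eventMatch e he h0 hs

theorem step_iff_stepTP_of_initEv_event_general (C : Contract)
    (Q : ℕ) (Ψ : Multiset Ev) (t : ℕ)
    (hQ : Q ∈ InitEv C)
    (hΨ : ∃ (n Q' : ℕ) (Ψ' : Multiset Ev), Ψ = (⟨0, n, Q, Q'⟩ : Ev) ::ₘ Ψ') :
    ∀ c : Config, Step C ⟨Q, Sig.none, Ψ, t⟩ c ↔ StepTP C ⟨Q, Sig.none, Ψ, t⟩ c := by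
  obtain ⟨n, Q', Ψ', rfl⟩ := hΨ
  have hblocked : ¬ nored ((⟨0, n, Q, Q'⟩ : Ev) ::ₘ Ψ') Q :=
    not_nored_src (Multiset.mem_cons_self _ _) rfl
  intro c
  rw [step_iff_eventMatchStep_of_not_nored hblocked,
    stepTP_iff_eventMatchStep_of_not_nored hblocked hQ]

/-- (Proposition 1.(ii)) For a configuration `⟨C(Q, −, Ψ), t⟩` of a
μStipula^DI contract `C` (equivalently, of a μStipula^DI+ contract), if `Q ∈ InitEv(C)`
and `Ψ = 0 ≫_n Q ⇒ Q' | Ψ'` for some `n`, `Q'`, `Ψ'`, then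
`⟨C(Q, −, Ψ), t⟩ → ℂ` iff `⟨C(Q, −, Ψ), t⟩ →_tp ℂ`. -/
theorem step_iff_stepTP_of_initEv_event (C : Contract) (hwf : C.WF) (hDI : DetInst C)
    (Q : ℕ) (Ψ : Multiset Ev) (t : ℕ)
    (hconf : ConfigOf C ⟨Q, Sig.none, Ψ, t⟩)
    (hQ : Q ∈ InitEv C)
    (hΨ : ∃ (n Q' : ℕ) (Ψ' : Multiset Ev), Ψ = (⟨0, n, Q, Q'⟩ : Ev) ::ₘ Ψ') :
    ∀ c : Config, Step C ⟨Q, Sig.none, Ψ, t⟩ c ↔ StepTP C ⟨Q, Sig.none, Ψ, t⟩ c :=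
  step_iff_stepTP_of_initEv_event_general C Q Ψ t hQ hΨ

end MicroStipula
end

section
/- Let ⟨C(Q, −, Ψ), t⟩ be a configuration of a μStipula^DI contract C (equivalently, of a μStipula^DI+ contract). If Q ∈ InitEv(C) and nored(Ψ, Q) holds, then ⟨C(Q, −, Ψ), t⟩ is stuck with respect to → if and only if ⟨C(Q, −, Ψ), t⟩ has no →_tp transition. -/
namespace MicroStipula

/-!
In a state `Q ∈ InitEv C` of a determinate contract no function can be invoked, and
`nored(Ψ, Q)` rules out (Event-Match); so (Tick) is the only move under `→`, while under
`→_tp` (Tick-Plus) is forbidden too and there is no move at all. Both sides of the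
equivalence therefore hold. For `→` one also needs the ticks to stay in `Q`: since every
event is instantaneous, the first tick empties `Ψ`, and the pending events only shrink.
-/

theorem EvOf.time_eq_zero {C : Contract} {e : Ev} (he : EvOf C e) (hC : Instantaneous C) :
    e.time = 0 := by
  obtain ⟨f, hf, d, hd, -, -, -, hle⟩ := he
  exact Nat.le_zero.mp (hC f hf d hd ▸ hle)

theorem tickDown_eq_zero {Ψ : Multiset Ev} (h : ∀ e ∈ Ψ, e.time = 0) : tickDown Ψ = 0 := by
  simp only [tickDown, Multiset.map_eq_zero, Multiset.filter_eq_nil, not_not]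
  exact h

theorem nored.mono {Ψ Ψ' : Multiset Ev} {Q : ℕ} (hn : nored Ψ Q) (hle : Ψ' ≤ Ψ) :
    nored Ψ' Q :=
  fun e he => hn e (Multiset.mem_of_le hle he)

section InitEvState

variable {C : Contract} {Q : ℕ} {Ψ : Multiset Ev} {t : ℕ}

theorem not_stepTP_of_mem_initEv (hD : Determinate C) (hQ : Q ∈ InitEv C) (hn : nored Ψ Q)
    (c : Config) : ¬ StepTP C ⟨Q, Sig.none, Ψ, t⟩ c := by
  rintro (⟨f, hf, -⟩ | _ | ⟨e, he, h0, hs⟩ | ⟨hQ'⟩)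
  · exact hD f hf hQ
  · exact hn e he h0 hs
  · exact hQ' hQ

theorem Step.eq_tick_of_mem_initEv (hD : Determinate C) (hQ : Q ∈ InitEv C) (hn : nored Ψ Q)
    {c : Config} (h : Step C ⟨Q, Sig.none, Ψ, t⟩ c) :
    c = ⟨Q, Sig.none, tickDown Ψ, t + 1⟩ := by
  rcases h with ⟨f, hf, -⟩ | _ | ⟨e, he, h0, hs⟩ | _
  · exact absurd hQ (hD f hf)
  · exact absurd hs (hn e he h0)
  · rfl

theorem stuck_of_mem_initEv (hD : Determinate C) (hQ : Q ∈ InitEv C) (hn : nored Ψ Q)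
    (h0 : ∀ e ∈ Ψ, e.time = 0) : Stuck C ⟨Q, Sig.none, Ψ, t⟩ := by
  have hinv : ∀ {c}, Relation.ReflTransGen (Step C) ⟨Q, Sig.none, Ψ, t⟩ c →
      ∃ Ψ' ≤ Ψ, ∃ t', c = ⟨Q, Sig.none, Ψ', t'⟩ := by
    intro c hc
    induction hc with
    | refl => exact ⟨Ψ, le_rfl, t, rfl⟩
    | tail _ hstep ih =>
      obtain ⟨Ψ', hle, t', rfl⟩ := ih
      rw [hstep.eq_tick_of_mem_initEv hD hQ (hn.mono hle),
        tickDown_eq_zero fun e he => h0 e (Multiset.mem_of_le hle he)]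
      exact ⟨0, Multiset.zero_le Ψ, t' + 1, rfl⟩
  intro c₁ c₂ hreach hstep
  obtain ⟨Ψ', hle, t', rfl⟩ := hinv hreach
  exact ⟨rfl, hstep.eq_tick_of_mem_initEv hD hQ (hn.mono hle)⟩

end InitEvState

theorem stuck_iff_no_stepTP_general (C : Contract) (hDI : DetInst C)
    (Q : ℕ) (Ψ : Multiset Ev) (t : ℕ)
    (hconf : ConfigOf C ⟨Q, Sig.none, Ψ, t⟩)
    (hQ : Q ∈ InitEv C) (hn : nored Ψ Q) :
    Stuck C ⟨Q, Sig.none, Ψ, t⟩ ↔ ∀ c : Config, ¬ StepTP C ⟨Q, Sig.none, Ψ, t⟩ c := by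
  obtain ⟨hD, hI⟩ := hDI
  have h0 : ∀ e ∈ Ψ, e.time = 0 := fun e he => (hconf.2.2 e he).time_eq_zero hI
  exact iff_of_true (stuck_of_mem_initEv hD hQ hn h0) (not_stepTP_of_mem_initEv hD hQ hn)

/-- (Proposition 1.(iii)) For a configuration `⟨C(Q, −, Ψ), t⟩` of a
μStipula^DI contract `C` (equivalently, of a μStipula^DI+ contract), if `Q ∈ InitEv(C)`
and `nored(Ψ, Q)`, then `⟨C(Q, −, Ψ), t⟩` is stuck w.r.t. `→` iff it has no `→_tp`
transition. -/
theorem stuck_iff_no_stepTP (C : Contract) (hwf : C.WF) (hDI : DetInst C)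
    (Q : ℕ) (Ψ : Multiset Ev) (t : ℕ)
    (hconf : ConfigOf C ⟨Q, Sig.none, Ψ, t⟩)
    (hQ : Q ∈ InitEv C) (hn : nored Ψ Q) :
    Stuck C ⟨Q, Sig.none, Ψ, t⟩ ↔ ∀ c : Config, ¬ StepTP C ⟨Q, Sig.none, Ψ, t⟩ c :=
  stuck_iff_no_stepTP_general C hDI Q Ψ t hconf hQ hn

end MicroStipula
end
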